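/- (Truth Lemma.) Let Γ₀ be a maximally Log-consistent set and M^c the canonical model for Γ₀. Then for every formula φ ∈ L_Int and every Δ ∈ [Γ₀]_⊞: M^c, Δ ⊨ φ if and only if φ ∈ Δ. -/

import Mathlib

/-- Formulas of classical propositional logic `L_CPL` over a countable set
of atomic propositions (represented by natural numbers). -/
inductive CPL : Type
  | top : CPL
  | atom : ℕ → CPL
  | neg : CPL → CPL
  | or : CPL → CPL → CPL
  | and : CPL → CPL → CPL
  deriving DecidableEq
/-- `Var(φ)`: the (finite) set of atomic propositions occurring in `φ`. -/
def CPL.var : CPL → Finset ℕ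
  | .top => ∅
  | .atom p => {p}
  | .neg φ => φ.var
  | .or φ ψ => φ.var ∪ ψ.var
  | .and φ ψ => φ.var ∪ ψ.var

/-- `p̄ := p ∨ ¬p`. -/
def pbar (p : ℕ) : CPL := .or (.atom p) (.neg (.atom p))

/-- Conjunction of a list of `L_CPL` formulas (empty conjunction is `⊤`). -/
def conjList : List CPL → CPL
  | [] => .top
  | [α] => α
  | α :: β :: rest => .and α (conjList (β :: rest))

/-- `φ̄ := ⋀_{p ∈ Var(φ)} (p ∨ ¬p)`, with the conjuncts taken in the fixed
(increasing) enumeration order of the atomic propositions. -/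
def CPL.bar (φ : CPL) : CPL := conjList ((φ.var.sort (· ≤ ·)).map pbar)
/-- Formulas of the language `L_Int`, extending `L_CPL` (embedded via `of`) by
negation, disjunction, conjunction, the global modality `⊞` (`box`) and the
intention modality `I` (`int`), which applies only to `L_CPL` formulas. -/
inductive Form : Type
  | of : CPL → Form
  | neg : Form → Form
  | or : Form → Form → Form
  | and : Form → Form → Form
  | box : Form → Form
  | int : CPL → Form
  deriving DecidableEq
/-- Material implication in `L_Int`: `φ → ψ := ¬φ ∨ ψ`. -/
def Form.imp (φ ψ : Form) : Form := .or (.neg φ) ψ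

/-- Material biconditional in `L_Int`: `φ ↔ ψ := (φ → ψ) ∧ (ψ → φ)`. -/
def Form.iff (φ ψ : Form) : Form := .and (φ.imp ψ) (ψ.imp φ)

/-- `⊥ := ¬⊤`. -/
def Form.bot : Form := .neg (.of .top)

/-- Boolean evaluation of `L_CPL` formulas under a valuation of the atoms. -/
def CPL.eval (v : ℕ → Bool) : CPL → Bool
  | .top => true
  | .atom p => v p
  | .neg φ => !φ.eval v
  | .or φ ψ => φ.eval v || ψ.eval v
  | .and φ ψ => φ.eval v && ψ.eval v

/-- Boolean evaluation of `L_Int` formulas, treating `⊞`- and `I`-formulas as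
atoms (evaluated by `u`). -/
def Form.eval (v : ℕ → Bool) (u : Form → Bool) : Form → Bool
  | .of α => α.eval v
  | .neg φ => !φ.eval v u
  | .or φ ψ => φ.eval v u || ψ.eval v u
  | .and φ ψ => φ.eval v u && ψ.eval v u
  | .box φ => u (.box φ)
  | .int α => u (.int α)

/-- Classical propositional tautologies of `L_Int` (with modal formulas
treated as atoms). -/
def Taut (φ : Form) : Prop := ∀ v u, φ.eval v u = true

/-- Derivability in the proof system `Log`: classical tautologies and Modus
Ponens; `S5` axioms and necessitation for `⊞`; and the intention axioms
Ax1: `I⊤`; Ax2: `Iφ → Iφ̄`; Ax3: `Iφ → ¬I¬φ`; Ax4: `(Iφ ∧ Iψ) ↔ I(φ ∧ ψ)`;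
Ax5: `⊞(ψ → φ) → ((Iψ ∧ Iφ̄) → Iφ)`. -/
inductive Deriv : Set Form → Form → Prop
  | prem {Γ : Set Form} {φ : Form} : φ ∈ Γ → Deriv Γ φ
  | taut {Γ : Set Form} {φ : Form} : Taut φ → Deriv Γ φ
  | mp {Γ : Set Form} {φ ψ : Form} :
      Deriv Γ (φ.imp ψ) → Deriv Γ φ → Deriv Γ ψ
  | boxK {Γ : Set Form} (φ ψ : Form) :
      Deriv Γ ((Form.box (φ.imp ψ)).imp ((Form.box φ).imp (Form.box ψ)))
  | boxT {Γ : Set Form} (φ : Form) : Deriv Γ ((Form.box φ).imp φ)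
  | box5 {Γ : Set Form} (φ : Form) :
      Deriv Γ ((Form.neg (Form.box φ)).imp (Form.box (Form.neg (Form.box φ))))
  | nec {Γ : Set Form} {φ : Form} : Deriv ∅ φ → Deriv Γ (Form.box φ)
  | ax1 {Γ : Set Form} : Deriv Γ (Form.int .top)
  | ax2 {Γ : Set Form} (α : CPL) :
      Deriv Γ ((Form.int α).imp (Form.int α.bar))
  | ax3 {Γ : Set Form} (α : CPL) :
      Deriv Γ ((Form.int α).imp (Form.neg (Form.int (CPL.neg α))))
  | ax4 {Γ : Set Form} (α β : CPL) :
      Deriv Γ ((Form.and (.int α) (.int β)).iff (Form.int (.and α β)))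
  | ax5 {Γ : Set Form} (α β : CPL) :
      Deriv Γ ((Form.box ((Form.of β).imp (Form.of α))).imp
        ((Form.and (.int β) (.int α.bar)).imp (Form.int α)))

/-- A set of formulas is `Log`-consistent if `⊥` is not derivable from it. -/
def LogConsistent (Γ : Set Form) : Prop := ¬ Deriv Γ Form.bot

/-- A maximally `Log`-consistent set: consistent with no proper consistent
extension. -/
def MCS (Γ : Set Form) : Prop :=
  LogConsistent Γ ∧ ∀ Δ, LogConsistent Δ → Γ ⊆ Δ → Δ = Γ
/-- `Γ[⊞] = {φ : ⊞φ ∈ Γ}`. -/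
def boxSet (Γ : Set Form) : Set Form := {φ | Form.box φ ∈ Γ}

/-- `Γ[I] = {φ ∈ L_Int : Iψ ∧ ⊞(ψ → φ) ∈ Γ for some ψ ∈ L_CPL}`. -/
def intSet (Γ : Set Form) : Set Form :=
  {φ | ∃ ψ : CPL, Form.and (Form.int ψ) (Form.box ((Form.of ψ).imp φ)) ∈ Γ}
/-- `[Γ₀]_⊞`: the `∼⊞`-equivalence class of `Γ₀`, i.e. the maximally
`Log`-consistent sets `Δ` with `Γ₀[⊞] ⊆ Δ`. -/
def canonDomain (Γ₀ : Set Form) : Set (Set Form) :=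
  {Δ | MCS Δ ∧ boxSet Γ₀ ⊆ Δ}
/-- The data of a problem-sensitive model: worlds, a conative relation, a set
of decision problems with a fusion operation and a solution assignment for
atoms, a problem assignment `f`, and a valuation `V`. -/
structure PreModel where
  W : Type
  R : W → W → Prop
  P : Type
  fuse : P → P → P
  satom : ℕ → Set P
  f : W → P
  V : ℕ → Set W

/-- The extension of the solution assignment to the whole language `L_CPL`. -/
def PreModel.sol (M : PreModel) : CPL → Set M.P
  | .top => Set.univ
  | .atom p => M.satom p
  | .neg φ => M.sol φ
  | .or φ ψ => M.sol φ ∩ M.sol ψ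
  | .and φ ψ => {c | ∃ a ∈ M.sol φ, ∃ b ∈ M.sol ψ, c = M.fuse a b}

/-- Classical satisfaction of `L_CPL` formulas at a world. -/
def PreModel.satCPL (M : PreModel) : M.W → CPL → Prop
  | _, .top => True
  | w, .atom p => w ∈ M.V p
  | w, .neg φ => ¬ M.satCPL w φ
  | w, .or φ ψ => M.satCPL w φ ∨ M.satCPL w ψ
  | w, .and φ ψ => M.satCPL w φ ∧ M.satCPL w ψ

/-- Satisfaction of `L_Int` formulas: Boolean clauses are classical,
`M,w ⊨ ⊞φ` iff `φ` holds at every world, and `M,w ⊨ Iα` iff `α` holds at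
every conative alternative of `w` and `f(w) ∈ s(α)`. -/
def PreModel.sat (M : PreModel) : M.W → Form → Prop
  | w, .of α => M.satCPL w α
  | w, .neg φ => ¬ M.sat w φ
  | w, .or φ ψ => M.sat w φ ∨ M.sat w ψ
  | w, .and φ ψ => M.sat w φ ∧ M.sat w ψ
  | _, .box φ => ∀ v, M.sat v φ
  | w, .int α => (∀ v, M.R w v → M.satCPL v α) ∧ M.f w ∈ M.sol α

/-- A problem-sensitive model: a nonempty set of worlds, a serial conative
relation, a problems model (nonempty carrier; idempotent, commutative,
associative fusion with unrestricted fusion; upward-closed solution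
assignment), a problem assignment, and a valuation. -/
structure PSModel extends PreModel where
  Wnonempty : Nonempty W
  serial : ∀ w, ∃ v, R w v
  Pnonempty : Nonempty P
  idem : ∀ a, fuse a a = a
  comm : ∀ a b, fuse a b = fuse b a
  assoc : ∀ a b c, fuse (fuse a b) c = fuse a (fuse b c)
  fusion : ∀ A : Set P, ∃ a, (∀ x ∈ A, fuse x a = a) ∧
    ∀ b, (∀ x ∈ A, fuse x b = b) → fuse a b = b
  upward : ∀ (p : ℕ) (a b : P), fuse a b = b → a ∈ satom p → b ∈ satom p
/-- The data of the canonical model for `Γ₀`: worlds are the members of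
`[Γ₀]_⊞`; `Δ R^c Γ` iff `Δ[I] ⊆ Γ`; `P^c = 𝒫(Prop)` with fusion `∪` and
`s^c(p) = {A : p ∈ A}`; `f^c(Δ) = {p : Ip̄ ∈ Δ}`; `V^c(p) = {Δ : p ∈ Δ}`. -/
def canonPre (Γ₀ : Set Form) : PreModel where
  W := {Δ : Set Form // Δ ∈ canonDomain Γ₀}
  R := fun Δ Γ => intSet Δ.1 ⊆ Γ.1
  P := Set ℕ
  fuse := fun A B => A ∪ B
  satom := fun p => {A | p ∈ A}
  f := fun Δ => {p | Form.int (pbar p) ∈ Δ.1}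
  V := fun p => {Δ | Form.of (.atom p) ∈ Δ.1}

/-! The modal clauses rest on one observation: `Γ₀[⊞]` (by necessitation and `K`) and `Δ[I]`
(by Ax1, Ax4 and `K`) are closed under derivability. So a formula outside either set is avoided
by a maximal consistent extension of it, and such an extension lies in `[Γ₀]_⊞`, since the
relation `∼⊞` is symmetric on maximal consistent sets by `T` and `5`. This yields
`⊞φ ∈ Δ ↔ ∀ Γ ∈ [Γ₀]_⊞, φ ∈ Γ` and `α ∈ Δ[I] ↔ ∀ Γ, Δ R^c Γ → α ∈ Γ`.
For intentions, Ax2 and Ax5 give `Iα ∈ Δ ↔ α ∈ Δ[I] ∧ Iᾱ ∈ Δ`, which matches the two clauses of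
the semantics of `I`: `f^c(Δ) ∈ s^c(α)` says that `Ip̄ ∈ Δ` for every atom `p` of `α`, and by
Ax4 this is `Iᾱ ∈ Δ`. -/

section Tautologies

variable (φ ψ χ : Form)

theorem taut_imp_self : Taut (φ.imp φ) := by
  intro v u; simp only [Form.imp, Form.eval]; grind

theorem taut_imp_intro : Taut (ψ.imp (φ.imp ψ)) := by
  intro v u; simp only [Form.imp, Form.eval]; grind

theorem taut_imp_imp_distrib : Taut ((φ.imp (ψ.imp χ)).imp ((φ.imp ψ).imp (φ.imp χ))) := by
  intro v u; simp only [Form.imp, Form.eval]; grind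

theorem taut_by_contra : Taut (((Form.neg φ).imp Form.bot).imp φ) := by
  intro v u; simp only [Form.imp, Form.bot, Form.eval, CPL.eval]; grind

theorem taut_absurd : Taut (φ.imp ((Form.neg φ).imp Form.bot)) := by
  intro v u; simp only [Form.imp, Form.bot, Form.eval, CPL.eval]; grind

theorem taut_and_intro : Taut (φ.imp (ψ.imp (φ.and ψ))) := by
  intro v u; simp only [Form.imp, Form.eval]; grind

theorem taut_and_left : Taut ((φ.and ψ).imp φ) := by
  intro v u; simp only [Form.imp, Form.eval]; grind

theorem taut_and_right : Taut ((φ.and ψ).imp ψ) := by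
  intro v u; simp only [Form.imp, Form.eval]; grind

theorem taut_or_inl : Taut (φ.imp (φ.or ψ)) := by
  intro v u; simp only [Form.imp, Form.eval]; grind

theorem taut_or_inr : Taut (ψ.imp (φ.or ψ)) := by
  intro v u; simp only [Form.imp, Form.eval]; grind

theorem taut_or_elim_neg : Taut ((φ.or ψ).imp ((Form.neg φ).imp ψ)) := by
  intro v u; simp only [Form.imp, Form.eval]; grind

theorem taut_iff_mp : Taut ((φ.iff ψ).imp (φ.imp ψ)) := by
  intro v u; simp only [Form.iff, Form.imp, Form.eval]; grind

theorem taut_iff_mpr : Taut ((φ.iff ψ).imp (ψ.imp φ)) := by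
  intro v u; simp only [Form.iff, Form.imp, Form.eval]; grind

theorem taut_of_top : Taut (Form.of .top) := fun _ _ => rfl

variable (α β : CPL)

theorem taut_of_neg : Taut ((Form.of (.neg α)).iff (Form.neg (.of α))) := by
  intro v u; simp only [Form.iff, Form.imp, Form.eval, CPL.eval]; grind

theorem taut_of_or : Taut ((Form.of (.or α β)).iff ((Form.of α).or (.of β))) := by
  intro v u; simp only [Form.iff, Form.imp, Form.eval, CPL.eval]; grind

theorem taut_of_and : Taut ((Form.of (.and α β)).iff ((Form.of α).and (.of β))) := by
  intro v u; simp only [Form.iff, Form.imp, Form.eval, CPL.eval]; grind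

theorem taut_imp_imp_of_and :
    Taut (((Form.of α).imp (φ.imp ψ)).imp
      (((Form.of β).imp φ).imp ((Form.of (α.and β)).imp ψ))) := by
  intro v u; simp only [Form.imp, Form.eval, CPL.eval]; grind

end Tautologies

namespace Deriv

theorem closure_induction {Γ : Set Form} {motive : (φ : Form) → Deriv Γ φ → Prop}
    (prem : ∀ φ (h : φ ∈ Γ), motive φ (.prem h))
    (thm : ∀ φ (h : ∀ Δ, Deriv Δ φ), motive φ (h Γ))
    (mp : ∀ φ ψ (h₁ : Deriv Γ (φ.imp ψ)) (h₂ : Deriv Γ φ),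
      motive _ h₁ → motive _ h₂ → motive ψ (.mp h₁ h₂))
    {φ : Form} (h : Deriv Γ φ) : motive φ h := by
  induction h with
  | prem h => exact prem _ h
  | taut h => exact thm _ fun _ => .taut h
  | mp h₁ h₂ ih₁ ih₂ => exact mp _ _ h₁ h₂ (ih₁ prem thm mp) (ih₂ prem thm mp)
  | boxK φ ψ => exact thm _ fun _ => .boxK φ ψ
  | boxT φ => exact thm _ fun _ => .boxT φ
  | box5 φ => exact thm _ fun _ => .box5 φ
  | nec h => exact thm _ fun _ => .nec h
  | ax1 => exact thm _ fun _ => .ax1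
  | ax2 α => exact thm _ fun _ => .ax2 α
  | ax3 α => exact thm _ fun _ => .ax3 α
  | ax4 α β => exact thm _ fun _ => .ax4 α β
  | ax5 α β => exact thm _ fun _ => .ax5 α β

theorem mono {Γ Δ : Set Form} (hΓΔ : Γ ⊆ Δ) {φ : Form} (h : Deriv Γ φ) : Deriv Δ φ := by
  induction h using Deriv.closure_induction with
  | prem φ hφ => exact .prem (hΓΔ hφ)
  | thm φ hφ => exact hφ Δ
  | mp φ ψ _ _ ih₁ ih₂ => exact .mp ih₁ ih₂

theorem deduction {Γ : Set Form} {φ ψ : Form} (h : Deriv (insert φ Γ) ψ) : Deriv Γ (φ.imp ψ) := by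
  induction h using Deriv.closure_induction with
  | prem χ hχ =>
    rcases hχ with rfl | hχ
    · exact .taut (taut_imp_self χ)
    · exact .mp (.taut (taut_imp_intro φ χ)) (.prem hχ)
  | thm χ hχ => exact .mp (.taut (taut_imp_intro φ χ)) (hχ Γ)
  | mp χ ρ _ _ ih₁ ih₂ => exact .mp (.mp (.taut (taut_imp_imp_distrib φ χ ρ)) ih₁) ih₂

theorem of_insert_neg_bot {Γ : Set Form} {φ : Form} (h : Deriv (insert (Form.neg φ) Γ) Form.bot) :
    Deriv Γ φ :=
  .mp (.taut (taut_by_contra φ)) h.deduction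

theorem exists_mem_of_sUnion {c : Set (Set Form)} (hc : DirectedOn (· ⊆ ·) c) (hne : c.Nonempty)
    {φ : Form} (h : Deriv (⋃₀ c) φ) : ∃ T ∈ c, Deriv T φ := by
  induction h using Deriv.closure_induction with
  | prem φ hφ =>
    obtain ⟨T, hT, hφT⟩ := hφ
    exact ⟨T, hT, .prem hφT⟩
  | thm φ hφ => exact ⟨hne.some, hne.some_mem, hφ _⟩
  | mp φ ψ _ _ ih₁ ih₂ =>
    obtain ⟨T₁, hT₁, h₁⟩ := ih₁
    obtain ⟨T₂, hT₂, h₂⟩ := ih₂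
    obtain ⟨T, hT, hT₁T, hT₂T⟩ := hc T₁ hT₁ T₂ hT₂
    exact ⟨T, hT, .mp (h₁.mono hT₁T) (h₂.mono hT₂T)⟩

theorem box_imp {Γ : Set Form} {φ ψ : Form} (himp : Deriv ∅ (φ.imp ψ))
    (hφ : Deriv Γ (Form.box φ)) : Deriv Γ (Form.box ψ) :=
  .mp (.mp (.boxK φ ψ) (.nec himp)) hφ

theorem box_imp₂ {Γ : Set Form} {φ ψ χ : Form} (himp : Deriv ∅ (φ.imp (ψ.imp χ)))
    (hφ : Deriv Γ (Form.box φ)) (hψ : Deriv Γ (Form.box ψ)) : Deriv Γ (Form.box χ) :=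
  .mp (.mp (.boxK ψ χ) (box_imp himp hφ)) hψ

end Deriv

theorem LogConsistent.insert_neg {Γ : Set Form} {φ : Form} (h : ¬ Deriv Γ φ) :
    LogConsistent (insert (Form.neg φ) Γ) :=
  fun hbot => h hbot.of_insert_neg_bot

theorem exists_MCS_superset {Γ : Set Form} (hΓ : LogConsistent Γ) : ∃ Δ, MCS Δ ∧ Γ ⊆ Δ := by
  obtain ⟨Δ, hΓΔ, hΔ⟩ := zorn_subset_nonempty {Δ | LogConsistent Δ}
    (fun c hc hchain hne => ⟨⋃₀ c, fun hbot => by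
      obtain ⟨T, hT, hTbot⟩ := hbot.exists_mem_of_sUnion hchain.directedOn hne
      exact hc hT hTbot, fun _ => Set.subset_sUnion_of_mem⟩) Γ hΓ
  exact ⟨Δ, ⟨hΔ.prop, fun Θ hΘ hΔΘ => (hΔ.2 hΘ hΔΘ).antisymm hΔΘ⟩, hΓΔ⟩

namespace MCS

variable {Γ : Set Form} (hΓ : MCS Γ)
include hΓ

theorem mem_of_consistent_insert {φ : Form} (h : LogConsistent (insert φ Γ)) : φ ∈ Γ :=
  hΓ.2 _ h (Set.subset_insert φ Γ) ▸ Set.mem_insert φ Γ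

theorem mem_of_deriv {φ : Form} (h : Deriv Γ φ) : φ ∈ Γ :=
  hΓ.mem_of_consistent_insert fun hbot => hΓ.1 (.mp hbot.deduction h)

theorem mem_of_imp {φ ψ : Form} (himp : Deriv Γ (φ.imp ψ)) (hφ : φ ∈ Γ) : ψ ∈ Γ :=
  hΓ.mem_of_deriv (.mp himp (.prem hφ))

theorem neg_mem_iff {φ : Form} : Form.neg φ ∈ Γ ↔ φ ∉ Γ :=
  ⟨fun hn h => hΓ.1 (.mp (.mp (.taut (taut_absurd φ)) (.prem h)) (.prem hn)),
    fun h => hΓ.mem_of_consistent_insert (.insert_neg (mt hΓ.mem_of_deriv h))⟩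

theorem and_mem_iff {φ ψ : Form} : φ.and ψ ∈ Γ ↔ φ ∈ Γ ∧ ψ ∈ Γ :=
  ⟨fun h => ⟨hΓ.mem_of_imp (.taut (taut_and_left φ ψ)) h,
      hΓ.mem_of_imp (.taut (taut_and_right φ ψ)) h⟩,
    fun ⟨hφ, hψ⟩ => hΓ.mem_of_imp (.mp (.taut (taut_and_intro φ ψ)) (.prem hφ)) hψ⟩

theorem or_mem_iff {φ ψ : Form} : φ.or ψ ∈ Γ ↔ φ ∈ Γ ∨ ψ ∈ Γ := by
  refine ⟨fun h => or_iff_not_imp_left.2 fun hφ => ?_, ?_⟩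
  · exact hΓ.mem_of_imp (.mp (.taut (taut_or_elim_neg φ ψ)) (.prem h)) (hΓ.neg_mem_iff.2 hφ)
  · rintro (h | h)
    exacts [hΓ.mem_of_imp (.taut (taut_or_inl φ ψ)) h, hΓ.mem_of_imp (.taut (taut_or_inr φ ψ)) h]

theorem mem_iff_of_iff {φ ψ : Form} (h : Deriv Γ (φ.iff ψ)) : φ ∈ Γ ↔ ψ ∈ Γ :=
  ⟨hΓ.mem_of_imp (.mp (.taut (taut_iff_mp φ ψ)) h),
    hΓ.mem_of_imp (.mp (.taut (taut_iff_mpr φ ψ)) h)⟩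

end MCS

theorem exists_MCS_not_mem {Γ : Set Form} {φ : Form} (h : ¬ Deriv Γ φ) :
    ∃ Δ, MCS Δ ∧ Γ ⊆ Δ ∧ φ ∉ Δ := by
  obtain ⟨Δ, hΔ, hsub⟩ := exists_MCS_superset (LogConsistent.insert_neg h)
  exact ⟨Δ, hΔ, (Set.subset_insert _ _).trans hsub, hΔ.neg_mem_iff.1 (hsub (Set.mem_insert _ _))⟩

section Box

theorem box_mem_of_deriv_boxSet {Γ : Set Form} (hΓ : MCS Γ) {φ : Form} (h : Deriv (boxSet Γ) φ) :
    Form.box φ ∈ Γ := by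
  induction h using Deriv.closure_induction with
  | prem φ hφ => exact hφ
  | thm φ hφ => exact hΓ.mem_of_deriv (.nec (hφ ∅))
  | mp φ ψ _ _ ih₁ ih₂ => exact hΓ.mem_of_imp (.mp (.boxK φ ψ) (.prem ih₁)) ih₂

variable {Γ Δ : Set Form} (hΓ : MCS Γ) (hΔ : MCS Δ)
include hΓ hΔ

theorem boxSet_subset_symm (h : boxSet Γ ⊆ Δ) : boxSet Δ ⊆ Γ := by
  intro φ hφ
  by_contra hφΓ
  have hnbox : Form.neg (Form.box φ) ∈ Γ :=
    hΓ.neg_mem_iff.2 fun hbox => hφΓ (hΓ.mem_of_imp (.boxT φ) hbox)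
  exact hΔ.neg_mem_iff.1 (h (hΓ.mem_of_imp (.box5 φ) hnbox)) hφ

theorem box_mem_of_boxSet_subset (h : boxSet Γ ⊆ Δ) {φ : Form} (hφ : Form.box φ ∈ Γ) :
    Form.box φ ∈ Δ := by
  by_contra hφΔ
  have hnbox := hΔ.mem_of_imp (.box5 φ) (hΔ.neg_mem_iff.2 hφΔ)
  exact hΓ.neg_mem_iff.1 (boxSet_subset_symm hΓ hΔ h hnbox) hφ

theorem box_mem_iff_of_boxSet_subset (h : boxSet Γ ⊆ Δ) {φ : Form} :
    Form.box φ ∈ Δ ↔ Form.box φ ∈ Γ :=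
  ⟨box_mem_of_boxSet_subset hΔ hΓ (boxSet_subset_symm hΓ hΔ h), box_mem_of_boxSet_subset hΓ hΔ h⟩

end Box

section Intention

variable {Δ : Set Form} (hΔ : MCS Δ)
include hΔ

theorem mem_intSet_iff {φ : Form} :
    φ ∈ intSet Δ ↔ ∃ ψ : CPL, Form.int ψ ∈ Δ ∧ Form.box ((Form.of ψ).imp φ) ∈ Δ :=
  exists_congr fun _ => hΔ.and_mem_iff

theorem mem_intSet_of_deriv {φ : Form} (h : Deriv (intSet Δ) φ) : φ ∈ intSet Δ := by
  induction h using Deriv.closure_induction with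
  | prem φ hφ => exact hφ
  | thm φ hφ => exact (mem_intSet_iff hΔ).2 ⟨.top, hΔ.mem_of_deriv .ax1,
      hΔ.mem_of_deriv (.nec (.mp (.taut (taut_imp_intro _ φ)) (hφ ∅)))⟩
  | mp φ ψ _ _ ih₁ ih₂ =>
    obtain ⟨α, hα, hαφψ⟩ := (mem_intSet_iff hΔ).1 ih₁
    obtain ⟨β, hβ, hβφ⟩ := (mem_intSet_iff hΔ).1 ih₂
    refine (mem_intSet_iff hΔ).2 ⟨α.and β, ?_, ?_⟩
    · exact (hΔ.mem_iff_of_iff (.ax4 α β)).1 (hΔ.and_mem_iff.2 ⟨hα, hβ⟩)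
    · exact hΔ.mem_of_deriv
        (Deriv.box_imp₂ (.taut (taut_imp_imp_of_and φ ψ α β)) (.prem hαφψ) (.prem hβφ))

theorem boxSet_subset_intSet : boxSet Δ ⊆ intSet Δ := fun φ hφ => (mem_intSet_iff hΔ).2
  ⟨.top, hΔ.mem_of_deriv .ax1,
    hΔ.mem_of_deriv (Deriv.box_imp (.taut (taut_imp_intro _ φ)) (.prem hφ))⟩

theorem int_conjList_mem_iff (L : List CPL) :
    Form.int (conjList L) ∈ Δ ↔ ∀ α ∈ L, Form.int α ∈ Δ := by
  induction L with
  | nil => simpa [conjList] using hΔ.mem_of_deriv .ax1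
  | cons α L ih =>
    cases L with
    | nil => simp [conjList]
    | cons β L =>
      rw [conjList, ← hΔ.mem_iff_of_iff (.ax4 α _), hΔ.and_mem_iff, ih]
      simp only [List.forall_mem_cons]

theorem int_bar_mem_iff (α : CPL) : Form.int α.bar ∈ Δ ↔ ∀ p ∈ α.var, Form.int (pbar p) ∈ Δ := by
  simp [CPL.bar, int_conjList_mem_iff hΔ]

theorem int_mem_iff {α : CPL} : Form.int α ∈ Δ ↔ Form.of α ∈ intSet Δ ∧ Form.int α.bar ∈ Δ := by
  refine ⟨fun h => ⟨(mem_intSet_iff hΔ).2 ⟨α, h, hΔ.mem_of_deriv (.nec (.taut (taut_imp_self _)))⟩,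
    hΔ.mem_of_imp (.ax2 α) h⟩, fun ⟨hα, hbar⟩ => ?_⟩
  obtain ⟨β, hβ, hβα⟩ := (mem_intSet_iff hΔ).1 hα
  exact hΔ.mem_of_imp (.mp (.ax5 α β) (.prem hβα)) (hΔ.and_mem_iff.2 ⟨hβ, hbar⟩)

end Intention

namespace canonPre

variable {Γ₀ : Set Form}

theorem mcs (Δ : (canonPre Γ₀).W) : MCS Δ.1 := Δ.2.1

theorem boxSet_subset (Δ : (canonPre Γ₀).W) : boxSet Γ₀ ⊆ Δ.1 := Δ.2.2

theorem satCPL_iff (Γ : (canonPre Γ₀).W) (α : CPL) :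
    (canonPre Γ₀).satCPL Γ α ↔ Form.of α ∈ Γ.1 := by
  have hΓ := mcs Γ
  induction α with
  | top => exact iff_of_true trivial (hΓ.mem_of_deriv (.taut taut_of_top))
  | atom p => exact Iff.rfl
  | neg α ih =>
    exact ih.not.trans ((hΓ.mem_iff_of_iff (.taut (taut_of_neg α))).trans hΓ.neg_mem_iff).symm
  | or α β ihα ihβ =>
    exact (or_congr ihα ihβ).trans
      ((hΓ.mem_iff_of_iff (.taut (taut_of_or α β))).trans hΓ.or_mem_iff).symm
  | and α β ihα ihβ =>
    exact (and_congr ihα ihβ).trans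
      ((hΓ.mem_iff_of_iff (.taut (taut_of_and α β))).trans hΓ.and_mem_iff).symm

theorem mem_sol_iff (α : CPL) (A : Set ℕ) :
    A ∈ (canonPre Γ₀).sol α ↔ ∀ p ∈ α.var, p ∈ A := by
  induction α generalizing A with
  | top => exact iff_of_true (Set.mem_univ A) (by simp [CPL.var])
  | atom p =>
    simp only [CPL.var, Finset.mem_singleton, forall_eq]
    rfl
  | neg α ih => exact ih A
  | or α β ihα ihβ =>
    refine (and_congr (ihα A) (ihβ A)).trans ?_
    simp only [CPL.var, Finset.mem_union, or_imp, forall_and]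
  | and α β ihα ihβ =>
    simp only [PreModel.sol, CPL.var, Finset.mem_union]
    constructor
    · rintro ⟨B, hB, C, hC, rfl⟩ p (hp | hp)
      exacts [Or.inl ((ihα B).1 hB p hp), Or.inr ((ihβ C).1 hC p hp)]
    · intro h
      exact ⟨A, (ihα A).2 fun p hp => h p (.inl hp), A, (ihβ A).2 fun p hp => h p (.inr hp),
        (Set.union_self A).symm⟩

theorem f_mem_sol_iff (Δ : (canonPre Γ₀).W) (α : CPL) :
    (canonPre Γ₀).f Δ ∈ (canonPre Γ₀).sol α ↔ Form.int α.bar ∈ Δ.1 :=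
  (mem_sol_iff α _).trans (int_bar_mem_iff (mcs Δ) α).symm

variable (hΓ₀ : MCS Γ₀)
include hΓ₀

theorem forall_mem_iff_box_mem (Δ : (canonPre Γ₀).W) (φ : Form) :
    (∀ Γ : (canonPre Γ₀).W, φ ∈ Γ.1) ↔ Form.box φ ∈ Δ.1 := by
  rw [box_mem_iff_of_boxSet_subset hΓ₀ (mcs Δ) (boxSet_subset Δ)]
  refine ⟨fun h => ?_, fun h Γ => boxSet_subset Γ h⟩
  by_contra hφ
  obtain ⟨Γ, hΓ, hsub, hφΓ⟩ := exists_MCS_not_mem (mt (box_mem_of_deriv_boxSet hΓ₀) hφ)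
  exact hφΓ (h ⟨Γ, hΓ, hsub⟩)

theorem forall_R_mem_iff_mem_intSet (Δ : (canonPre Γ₀).W) (φ : Form) :
    (∀ Γ, (canonPre Γ₀).R Δ Γ → φ ∈ Γ.1) ↔ φ ∈ intSet Δ.1 := by
  refine ⟨fun h => ?_, fun h Γ hΔΓ => hΔΓ h⟩
  by_contra hφ
  obtain ⟨Γ, hΓ, hsub, hφΓ⟩ := exists_MCS_not_mem (mt (mem_intSet_of_deriv (mcs Δ)) hφ)
  have hΓ₀Γ : boxSet Γ₀ ⊆ Γ := fun ψ hψ => hsub (boxSet_subset_intSet (mcs Δ)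
    (box_mem_of_boxSet_subset hΓ₀ (mcs Δ) (boxSet_subset Δ) (show Form.box ψ ∈ Γ₀ from hψ)))
  exact hφΓ (h ⟨Γ, hΓ, hΓ₀Γ⟩ hsub)

end canonPre

/-- Truth Lemma: For any maximally `Log`-consistent `Γ₀`, any
world `Δ ∈ [Γ₀]_⊞` of the canonical model for `Γ₀`, and any `φ ∈ L_Int`:
`M^c, Δ ⊨ φ` iff `φ ∈ Δ`. -/
theorem truth_lemma (Γ₀ : Set Form) (hΓ₀ : MCS Γ₀)
    (Δ : (canonPre Γ₀).W) (φ : Form) :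
    (canonPre Γ₀).sat Δ φ ↔ φ ∈ Δ.1 := by
  induction φ generalizing Δ with
  | of α => exact canonPre.satCPL_iff Δ α
  | neg φ ih => exact (ih Δ).not.trans (canonPre.mcs Δ).neg_mem_iff.symm
  | or φ ψ ihφ ihψ => exact (or_congr (ihφ Δ) (ihψ Δ)).trans (canonPre.mcs Δ).or_mem_iff.symm
  | and φ ψ ihφ ihψ => exact (and_congr (ihφ Δ) (ihψ Δ)).trans (canonPre.mcs Δ).and_mem_iff.symm
  | box φ ih => exact (forall_congr' ih).trans (canonPre.forall_mem_iff_box_mem hΓ₀ Δ φ)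
  | int α =>
    rw [PreModel.sat, int_mem_iff (canonPre.mcs Δ), ← canonPre.forall_R_mem_iff_mem_intSet hΓ₀,
      canonPre.f_mem_sol_iff]
    simp only [canonPre.satCPL_iff]
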